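/- Let α, τ, ξ be real numbers with 0 < α < 1/2 and 0 < ξ < 1/4, and suppose either α ≤ τ < 1 or 1+α ≤ τ < 2. Then arg T_B > −4αξ and −4αξ > arg T_s, where arg denotes the principal argument with values in (−π, π]. -/

import Mathlib

/-!
Write `w = π(1 - τ + α) - iπξ`, so that `T_s = sin w / sin (w + πα)`. Multiplying `T_s` by
`|sin (w + πα)|²` gives `sin w · conj (sin (w + πα))`, whose imaginary part is
`-sin(πα) cosh(πξ) sinh(πξ)` and whose real part is at most `cosh²(πξ)`; hence its rotation by
`4αξ` stays in the lower half-plane, which says `arg T_s < -4αξ`.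

For `T_B`, Gauss' product `Γ(s) = lim n^s n! / ∏_{j ≤ n} (s + j)` exhibits
`Γ(a + iξ) / Γ(a + 2α + iξ)`, `a = τ - 2α + 1`, as a limit of positive multiples of
`∏_{j ≤ n} (a + 2α + j + iξ) / (a + j + iξ)`. The `j`-th factor has argument in
`[-2αξ / ((a + j)(a + 2α + j)), 0]`, and for `a ≥ 1 - α` these lower bounds add up to at least
`-2αξ (1 / (1 - α²) + 2 / 3) > -4αξ`; the partial arguments never wrap around, and the bound
passes to the limit since `arg` is continuous away from the negative real axis.
-/

/-- The term `T_s` of the generalised Fredholm symbol on the segment `Γ₁`. -/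
noncomputable def Ts (α τ ξ : ℝ) : ℂ :=
  Complex.sin ((Real.pi : ℂ) * (1 - (τ : ℂ) + (α : ℂ) - Complex.I * (ξ : ℂ))) /
    Complex.sin ((Real.pi : ℂ) * (1 - (τ : ℂ) + 2 * (α : ℂ) - Complex.I * (ξ : ℂ)))

/-- The term `T_B` of the generalised Fredholm symbol on the segment `Γ₁`. -/
noncomputable def TB (α τ ξ : ℝ) : ℂ :=
  Complex.sin ((Real.pi : ℂ) * (α : ℂ)) / (Real.pi : ℂ) *
      Complex.Gamma ((τ : ℂ) - 2 * (α : ℂ) + 1 + Complex.I * (ξ : ℂ)) *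
      Complex.Gamma (2 * (α : ℂ)) /
    Complex.Gamma ((τ : ℂ) + 1 + Complex.I * (ξ : ℂ))

open Complex ComplexConjugate Filter Topology
open scoped Real Nat

namespace Complex

lemma im_mul_exp_ofReal_mul_I (z : ℂ) (θ : ℝ) :
    (z * exp (θ * I)).im = ‖z‖ * Real.sin (arg z + θ) := by
  rw [mul_im, exp_ofReal_mul_I_re, exp_ofReal_mul_I_im, ← norm_mul_cos_arg, ← norm_mul_sin_arg,
    Real.sin_add]
  ring

lemma arg_lt_neg_of_im_mul_exp_neg {z : ℂ} {θ : ℝ} (hθ : θ ≤ π) (hz : z.im < 0)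
    (h : (z * exp (θ * I)).im < 0) : arg z < -θ := by
  rw [im_mul_exp_ofReal_mul_I] at h
  have harg : arg z < 0 := arg_neg_iff.mpr hz
  by_contra! hle
  have := Real.sin_nonneg_of_nonneg_of_le_pi (by linarith) (by linarith : arg z + θ ≤ π)
  exact (mul_nonneg (norm_nonneg z) this).not_gt h

lemma arg_div_eq_arg_mul_conj (z w : ℂ) : arg (z / w) = arg (z * conj w) := by
  rcases eq_or_ne w 0 with rfl | hw
  · simp
  rw [div_eq_mul_inv, inv_def, ← mul_assoc, arg_mul_real (inv_pos.mpr (normSq_pos.mpr hw))]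

lemma arg_nonpos_of_im_nonpos {z : ℂ} (hre : 0 ≤ z.re) (him : z.im ≤ 0) : arg z ≤ 0 := by
  rcases him.lt_or_eq with h | h
  · exact (arg_neg_iff.mpr h).le
  · exact (arg_eq_zero_iff.mpr ⟨hre, h⟩).le

lemma im_div_re_le_arg {z : ℂ} (hre : 0 < z.re) (him : z.im ≤ 0) : z.im / z.re ≤ arg z := by
  have h := Real.le_tan (x := -arg z) (by linarith [arg_nonpos_of_im_nonpos hre.le him])
    (by linarith [neg_pi_div_two_lt_arg_iff.mpr (Or.inl hre)])
  rw [Real.tan_neg, tan_arg] at h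
  linarith

lemma arg_prod_eq_sum_of_arg_nonpos {ι : Type*} {s : Finset ι} {f : ι → ℂ}
    (hf : ∀ i ∈ s, f i ≠ 0) (hnonpos : ∀ i ∈ s, arg (f i) ≤ 0)
    (hsum : -π < ∑ i ∈ s, arg (f i)) : arg (∏ i ∈ s, f i) = ∑ i ∈ s, arg (f i) := by
  induction s using Finset.cons_induction with
  | empty => simp
  | cons a s _ ih =>
    simp only [Finset.mem_cons, forall_eq_or_imp] at hf hnonpos
    rw [Finset.sum_cons] at hsum ⊢
    have hs : arg (∏ i ∈ s, f i) = ∑ i ∈ s, arg (f i) :=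
      ih hf.2 hnonpos.2 (by linarith [hnonpos.1])
    have hs0 : ∑ i ∈ s, arg (f i) ≤ 0 := Finset.sum_nonpos hnonpos.2
    have hmem : arg (f a) + arg (∏ i ∈ s, f i) ∈ Set.Ioc (-π) π := by
      rw [hs]
      exact ⟨hsum, by linarith [hnonpos.1, Real.pi_pos]⟩
    rw [Finset.prod_cons, arg_mul hf.1 (Finset.prod_ne_zero_iff.mpr hf.2) hmem, hs]

lemma le_arg_of_tendsto {ι : Type*} {l : Filter ι} [l.NeBot] {f : ι → ℂ} {z : ℂ} {c : ℝ}
    (hf : Tendsto f l (𝓝 z)) (hz : z ≠ 0) (hre : ∀ᶠ i in l, 0 ≤ (f i).re)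
    (harg : ∀ᶠ i in l, c ≤ arg (f i)) : c ≤ arg z := by
  have hzre : 0 ≤ z.re := ge_of_tendsto ((continuous_re.tendsto z).comp hf) hre
  have hslit : z ∈ slitPlane := by
    rcases hzre.lt_or_eq with h | h
    · exact mem_slitPlane_iff.mpr (Or.inl h)
    · exact mem_slitPlane_iff.mpr (Or.inr fun him => hz (ext h.symm him))
  exact ge_of_tendsto ((continuousAt_arg hslit).tendsto.comp hf) harg

lemma GammaSeq_div_GammaSeq (s t : ℂ) {n : ℕ} (hn : n ≠ 0) :
    GammaSeq s n / GammaSeq t n =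
      (n : ℂ) ^ (s - t) * ∏ j ∈ Finset.range (n + 1), (t + j) / (s + j) := by
  have hfact : (n ! : ℂ) ≠ 0 := by exact_mod_cast n.factorial_ne_zero
  rw [GammaSeq, GammaSeq, Finset.prod_div_distrib, cpow_sub _ _ (Nat.cast_ne_zero.mpr hn),
    div_div_div_eq]
  field_simp

lemma arg_add_mul_I_div_mem_Icc {p d y : ℝ} (hp : 0 < p) (hd : 0 ≤ d) (hy : 0 ≤ y) :
    arg ((↑(p + d) + y * I) / (p + y * I)) ∈ Set.Icc (-(y * d / (p * (p + d)))) 0 := by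
  rw [arg_div_eq_arg_mul_conj]
  set z := (↑(p + d) + y * I) * conj (↑p + ↑y * I)
  have hre : z.re = p * (p + d) + y ^ 2 := by simp [z]; ring
  have him : z.im = -(y * d) := by simp [z]; ring
  have hre_pos : 0 < z.re := by rw [hre]; positivity
  have him_nonpos : z.im ≤ 0 := by rw [him]; linarith [mul_nonneg hy hd]
  refine ⟨le_trans ?_ (im_div_re_le_arg hre_pos him_nonpos),
    arg_nonpos_of_im_nonpos hre_pos.le him_nonpos⟩
  rw [him, hre, neg_div, neg_le_neg_iff]
  exact div_le_div_of_nonneg_left (by positivity) (by positivity) (by nlinarith)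

lemma neg_le_arg_Gamma_div_Gamma {x d y K : ℝ} (hx : 0 < x) (hd : 0 ≤ d) (hy : 0 ≤ y)
    (hK : ∀ n : ℕ, ∑ j ∈ Finset.range (n + 1), 1 / ((x + j) * (x + j + d)) ≤ K)
    (hyd : y * d * K ≤ π / 2) :
    -(y * d * K) ≤ arg (Gamma (x + y * I) / Gamma (↑(x + d) + y * I)) := by
  set s : ℂ := x + y * I
  set t : ℂ := ↑(x + d) + y * I
  set w : ℕ → ℂ := fun j => (↑(x + j + d) + y * I) / (↑(x + j) + y * I)
  have hw : ∀ j : ℕ, (t + j) / (s + j) = w j := fun j => by simp only [s, t, w]; push_cast; ring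
  have hw_arg : ∀ j : ℕ, arg (w j) ∈ Set.Icc (-(y * d / ((x + j) * (x + j + d)))) 0 :=
    fun j => arg_add_mul_I_div_mem_Icc (by positivity) hd hy
  have hw_ne : ∀ j : ℕ, w j ≠ 0 := fun j => by
    have hj : (0 : ℝ) ≤ j := j.cast_nonneg
    exact div_ne_zero (ne_zero_of_re_pos (by simp; linarith))
      (ne_zero_of_re_pos (by simp; linarith))
  have hsum : ∀ n : ℕ, -(y * d * K) ≤ ∑ j ∈ Finset.range (n + 1), arg (w j) := fun n => by
    calc -(y * d * K) ≤ -(y * d * ∑ j ∈ Finset.range (n + 1), 1 / ((x + j) * (x + j + d))) := by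
          gcongr; exact hK n
      _ = ∑ j ∈ Finset.range (n + 1), -(y * d / ((x + j) * (x + j + d))) := by
          rw [Finset.mul_sum, ← Finset.sum_neg_distrib]; simp only [mul_one_div]
      _ ≤ _ := Finset.sum_le_sum fun j _ => (hw_arg j).1
  have harg : ∀ n : ℕ, n ≠ 0 →
      arg (GammaSeq s n / GammaSeq t n) = ∑ j ∈ Finset.range (n + 1), arg (w j) := by
    intro n hn
    have hpow : (n : ℂ) ^ (s - t) = ↑((n : ℝ) ^ (-d)) := by
      rw [ofReal_cpow n.cast_nonneg]; simp only [s, t]; push_cast; ring_nf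
    rw [GammaSeq_div_GammaSeq s t hn, hpow, arg_real_mul _ (by positivity),
      Finset.prod_congr rfl fun j _ => hw j]
    exact arg_prod_eq_sum_of_arg_nonpos (fun j _ => hw_ne j) (fun j _ => (hw_arg j).2)
      (by linarith [hsum n, Real.pi_pos])
  have hΓ : Gamma t ≠ 0 := Gamma_ne_zero_of_re_pos (by simp [t]; linarith)
  refine le_arg_of_tendsto ((GammaSeq_tendsto_Gamma s).div (GammaSeq_tendsto_Gamma t) hΓ)
    (div_ne_zero (Gamma_ne_zero_of_re_pos (by simp [s]; linarith)) hΓ) ?_ ?_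
  · filter_upwards [eventually_ne_atTop 0] with n hn
    rw [← abs_arg_le_pi_div_two_iff, abs_le, Pi.div_apply, harg n hn]
    exact ⟨by linarith [hsum n], (Finset.sum_nonpos fun j _ => (hw_arg j).2).trans (by positivity)⟩
  · filter_upwards [eventually_ne_atTop 0] with n hn
    rw [Pi.div_apply, harg n hn]
    exact hsum n

lemma sin_sub_mul_I_mul_conj_sin_sub_mul_I (x₁ x₂ y : ℝ) :
    sin (x₁ - y * I) * conj (sin (x₂ - y * I)) =
      ↑(Real.sin x₁ * Real.sin x₂ + Real.cos (x₁ - x₂) * Real.sinh y ^ 2) +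
        ↑(Real.sin (x₁ - x₂) * Real.cosh y * Real.sinh y) * I := by
  have hsin : ∀ x : ℝ,
      sin (x - y * I) = ↑(Real.sin x * Real.cosh y) - ↑(Real.cos x * Real.sinh y) * I := fun x => by
    rw [sub_eq_add_neg, ← neg_mul, ← ofReal_neg, sin_add_mul_I, ← ofReal_sin, ← ofReal_cos,
      ← ofReal_cosh, ← ofReal_sinh, Real.cosh_neg, Real.sinh_neg]
    push_cast
    ring
  rw [hsin, hsin, map_sub, map_mul, conj_ofReal, conj_ofReal, conj_I, Real.cos_sub, Real.sin_sub]
  push_cast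
  linear_combination sin (x₁ : ℂ) * sin (x₂ : ℂ) * cosh_sq (y : ℂ) -
    cos (x₁ : ℂ) * cos (x₂ : ℂ) * sinh (y : ℂ) ^ 2 * I_sq

lemma arg_sin_div_sin_lt_neg {x a y θ : ℝ} (hθ₀ : 0 ≤ θ) (hθ : θ ≤ π) (hy : 0 < y)
    (ha : 0 < Real.sin a) (h : Real.cosh y * Real.sin θ < Real.sinh y * Real.cos θ * Real.sin a) :
    arg (sin (x - y * I) / sin (↑(x + a) - y * I)) < -θ := by
  rw [arg_div_eq_arg_mul_conj, sin_sub_mul_I_mul_conj_sin_sub_mul_I,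
    show x - (x + a) = -a by ring, Real.cos_neg, Real.sin_neg]
  set X := Real.sin x * Real.sin (x + a) + Real.cos a * Real.sinh y ^ 2
  have hX : X ≤ Real.cosh y ^ 2 := by
    have hss : Real.sin x * Real.sin (x + a) ≤ 1 := by
      nlinarith [Real.sin_sq_le_one x, Real.sin_sq_le_one (x + a),
        sq_nonneg (Real.sin x - Real.sin (x + a))]
    nlinarith [Real.cos_le_one a, sq_nonneg (Real.sinh y), Real.cosh_sq y]
  have hsinh : 0 < Real.sinh y := Real.sinh_pos_iff.mpr hy
  have hcosh : 0 < Real.cosh y := Real.cosh_pos y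
  have hsinθ : 0 ≤ Real.sin θ := Real.sin_nonneg_of_nonneg_of_le_pi hθ₀ hθ
  apply arg_lt_neg_of_im_mul_exp_neg hθ
  · simp only [add_im, ofReal_im, mul_im, ofReal_re, I_re, I_im]
    nlinarith [mul_pos (mul_pos ha hcosh) hsinh]
  · simp only [mul_im, add_re, add_im, ofReal_re, ofReal_im, mul_re, I_re, I_im,
      exp_ofReal_mul_I_re, exp_ofReal_mul_I_im]
    nlinarith [mul_le_mul_of_nonneg_right hX hsinθ, mul_lt_mul_of_pos_left h hcosh]

end Complex

lemma sum_range_one_div_mul_le {α x : ℝ} (hα₀ : 0 ≤ α) (hα : α ≤ 1 / 2) (hx : 1 - α ≤ x)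
    (n : ℕ) :
    ∑ j ∈ Finset.range (n + 1), 1 / ((x + j) * (x + j + 2 * α)) ≤ 1 / (1 - α ^ 2) + 2 / 3 := by
  have hterm : ∀ j : ℕ, 1 / ((x + j) * (x + j + 2 * α)) ≤ 1 / ((j + 1) ^ 2 - α ^ 2) := fun j => by
    have hj : (0 : ℝ) ≤ j := j.cast_nonneg
    apply one_div_le_one_div_of_le (by nlinarith)
    nlinarith [mul_le_mul (by linarith : j + 1 - α ≤ x + j)
      (by linarith : j + 1 + α ≤ x + j + 2 * α) (by linarith) (by linarith)]
  set g : ℕ → ℝ := fun j => 1 / ((j : ℝ) + 3 / 2)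
  have htail : ∀ j : ℕ,
      1 / ((x + ↑(j + 1)) * (x + ↑(j + 1) + 2 * α)) ≤ g j - g (j + 1) := fun j => by
    have hj : (0 : ℝ) ≤ j := j.cast_nonneg
    calc _ ≤ 1 / ((((j + 1 : ℕ) : ℝ) + 1) ^ 2 - α ^ 2) := hterm (j + 1)
      _ ≤ 1 / ((j + 3 / 2) * (j + 5 / 2)) :=
          one_div_le_one_div_of_le (by positivity) (by push_cast; nlinarith)
      _ = g j - g (j + 1) := by simp only [g]; push_cast; field_simp; ring
  have hhead : 1 / ((x + ↑(0 : ℕ)) * (x + ↑(0 : ℕ) + 2 * α)) ≤ 1 / (1 - α ^ 2) := by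
    simpa using hterm 0
  rw [Finset.sum_range_succ']
  have := (Finset.sum_le_sum fun j (_ : j ∈ Finset.range n) => htail j).trans_eq
    (Finset.sum_range_sub' g n)
  have hg : 0 ≤ g n := by positivity
  have hg0 : g 0 = 2 / 3 := by norm_num [g]
  linarith

lemma cosh_pi_div_four_lt : Real.cosh (π / 4) < 1.37 := by
  have hπ := Real.pi_lt_d4
  have ht : (π / 4) ^ 2 / 2 ≤ 0.3085 := by nlinarith [Real.pi_pos]
  calc Real.cosh (π / 4) ≤ Real.exp ((π / 4) ^ 2 / 2) := Real.cosh_le_exp_half_sq _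
    _ ≤ Real.exp 0.3085 := Real.exp_le_exp.mpr ht
    _ ≤ ∑ m ∈ Finset.range 3, (0.3085 : ℝ) ^ m / m ! + 0.3085 ^ 3 * (3 + 1) / (3 ! * 3) :=
        Real.exp_bound' (by norm_num) (by norm_num) (by norm_num)
    _ < 1.37 := by norm_num [Finset.sum_range_succ, Nat.factorial]

lemma cosh_mul_sin_lt_sinh_mul_cos_mul_sin {α ξ : ℝ} (hα : 0 < α) (hα' : α < 1 / 2) (hξ : 0 < ξ)
    (hξ' : ξ < 1 / 4) :
    Real.cosh (π * ξ) * Real.sin (4 * α * ξ) <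
      Real.sinh (π * ξ) * Real.cos (4 * α * ξ) * Real.sin (π * α) := by
  have hπ := Real.pi_gt_d2
  have hθ : 4 * α * ξ < 1 / 2 := by nlinarith
  have hsin : Real.sin (4 * α * ξ) ≤ 4 * α * ξ := Real.sin_le (by positivity)
  have hcos : 7 / 8 ≤ Real.cos (4 * α * ξ) := by
    nlinarith [Real.one_sub_sq_div_two_le_cos (x := 4 * α * ξ), mul_pos hα hξ]
  have hsinα : 2 * α ≤ Real.sin (π * α) := by
    have := Real.mul_le_sin (x := π * α) (by positivity) (by nlinarith)
    rwa [show 2 / π * (π * α) = 2 * α by field_simp] at this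
  have hsinh : π * ξ < Real.sinh (π * ξ) := Real.self_lt_sinh_iff.mpr (by positivity)
  have hcosh : Real.cosh (π * ξ) < 1.37 := by
    refine lt_of_le_of_lt (Real.cosh_le_cosh.mpr ?_) cosh_pi_div_four_lt
    rw [abs_of_pos (by positivity), abs_of_pos (by positivity)]
    nlinarith
  calc Real.cosh (π * ξ) * Real.sin (4 * α * ξ) ≤ 1.37 * (4 * α * ξ) :=
        mul_le_mul hcosh.le hsin (Real.sin_nonneg_of_nonneg_of_le_pi (by positivity) (by linarith))
          (by norm_num)
    _ < π * ξ * (7 / 8) * (2 * α) := by nlinarith [mul_pos hα hξ]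
    _ ≤ Real.sinh (π * ξ) * Real.cos (4 * α * ξ) * Real.sin (π * α) := by
        gcongr

lemma neg_four_mul_lt_arg_TB {α τ ξ : ℝ} (hα : 0 < α) (hα' : α < 1 / 2) (hξ : 0 < ξ)
    (hξ' : ξ < 1 / 4) (hτ : α ≤ τ) : -4 * α * ξ < arg (TB α τ ξ) := by
  have hTB : TB α τ ξ = ↑(Real.sin (π * α) / π * Real.Gamma (2 * α)) *
      (Gamma (↑(τ - 2 * α + 1) + ξ * I) / Gamma (↑(τ - 2 * α + 1 + 2 * α) + ξ * I)) := by
    rw [TB, ofReal_mul, ofReal_div, ofReal_sin, ← Gamma_ofReal]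
    push_cast
    ring_nf
  have hc : 0 < Real.sin (π * α) / π * Real.Gamma (2 * α) :=
    mul_pos (div_pos (Real.sin_pos_of_pos_of_lt_pi (by positivity) (by nlinarith [Real.pi_pos]))
      Real.pi_pos) (Real.Gamma_pos_of_pos (by positivity))
  have hK : 1 / (1 - α ^ 2) < 4 / 3 := by rw [div_lt_iff₀ (by nlinarith)]; nlinarith
  have hΓ := neg_le_arg_Gamma_div_Gamma (by linarith) (by positivity) hξ.le
    (sum_range_one_div_mul_le hα.le hα'.le (x := τ - 2 * α + 1) (by linarith))
    (by nlinarith [Real.pi_gt_three, mul_pos hα hξ])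
  rw [hTB, arg_real_mul _ hc]
  nlinarith [mul_pos hα hξ]

lemma arg_Ts_lt_neg_four_mul {α τ ξ : ℝ} (hα : 0 < α) (hα' : α < 1 / 2) (hξ : 0 < ξ)
    (hξ' : ξ < 1 / 4) : arg (Ts α τ ξ) < -4 * α * ξ := by
  have hTs : Ts α τ ξ = sin (↑(π * (1 - τ + α)) - ↑(π * ξ) * I) /
      sin (↑(π * (1 - τ + α) + π * α) - ↑(π * ξ) * I) := by
    rw [Ts]
    push_cast
    ring_nf
  rw [hTs, neg_mul, neg_mul]
  exact arg_sin_div_sin_lt_neg (by positivity) (by nlinarith [Real.pi_gt_three]) (by positivity)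
    (Real.sin_pos_of_pos_of_lt_pi (by positivity) (by nlinarith [Real.pi_pos]))
    (cosh_mul_sin_lt_sinh_mul_cos_mul_sin hα hα' hξ hξ')

theorem arg_TB_gt_neg_four_alpha_xi_gt_arg_Ts
    (α τ ξ : ℝ) (hα : 0 < α) (hα' : α < 1 / 2) (hξ : 0 < ξ) (hξ' : ξ < 1 / 4)
    (hτ : (α ≤ τ ∧ τ < 1) ∨ (1 + α ≤ τ ∧ τ < 2)) :
    -4 * α * ξ < Complex.arg (TB α τ ξ) ∧ Complex.arg (Ts α τ ξ) < -4 * α * ξ :=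
  ⟨neg_four_mul_lt_arg_TB hα hα' hξ hξ' (by rcases hτ with ⟨h, -⟩ | ⟨h, -⟩ <;> linarith),
    arg_Ts_lt_neg_four_mul hα hα' hξ hξ'⟩
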